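/- arXiv:2311.11854 — 3 statements merged into one kernel-verified Lean document; each statement's English description precedes it below -/
import Mathlib

section
/- For every natural numbers d ≥ 1 and n with n ≥ d, and every t ∈ [0,t*], the nested oscillatory integral admits the exact decomposition G_d(t) = S_n^d(t) + E_n^d(t). -/
noncomputable section

variable {A : Type*} [NormedRing A] [NormedAlgebra ℂ A] [CompleteSpace A]

/-- Iterated commutator: `adL L 0 x = x`, `adL L (k+1) x = L·(adL L k x) − (adL L k x)·L`. -/
def adL (L : A) : ℕ → A → A
  | 0, x => x
  | k+1, x => L * adL L k x - adL L k x * L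

/-- `Nop L α k l r` is the operator `N(l,r)` relative to the multi-index `k` (1-based
entries `k 1, k 2, …`): `N(l,r) = ad_L^{k_l}(α)` if `l = r`,
`N(l,r) = ad_L^{k_r}(α·N(l,r−1))` if `l < r`, and `N(l,r) = 1` if `l > r`. -/
def Nop (L α : A) (k : ℕ → ℕ) (l : ℕ) : ℕ → A
  | 0 => if l = 0 then adL L (k 0) α else 1
  | r+1 =>
    if r + 1 < l then 1
    else if l = r + 1 then adL L (k (r + 1)) α
    else adL L (k (r + 1)) (α * Nop L α k l r)

/-- The coefficients `a_j^ℓ = ∏_{r=0}^{j−1} (j−r)^{−(k_{ℓ−r}+1)}` (with `a_0^ℓ = 1`),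
viewed as complex scalars. -/
def coefA (k : ℕ → ℕ) (j ℓ : ℕ) : ℂ :=
  ∏ r ∈ Finset.range j, (((j - r : ℕ) : ℂ) ^ (k (ℓ - r) + 1))⁻¹

/-- The coefficients `b_j^ℓ = j^{−k_ℓ}·∏_{r=1}^{j−1} (j−r)^{−(k_{ℓ−r}+1)}` for `j ≥ 1`
(with `b_0^ℓ = 1`), viewed as complex scalars. -/
def coefB (k : ℕ → ℕ) (j ℓ : ℕ) : ℂ :=
  if j = 0 then 1
  else ((j : ℂ) ^ (k ℓ))⁻¹ * ∏ r ∈ Finset.Ico 1 j, (((j - r : ℕ) : ℂ) ^ (k (ℓ - r) + 1))⁻¹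

/-- `Fc L α k ℓ` is `F_ℓ`: `F₀ = 1`, `F_ℓ = −Σ_{m=0}^{ℓ−1} a_{ℓ−m}^ℓ·N(m+1,ℓ)·F_m`. -/
def Fc (L α : A) (k : ℕ → ℕ) : ℕ → A
  | 0 => 1
  | ℓ+1 => -∑ m ∈ (Finset.range (ℓ + 1)).attach,
      coefA k (ℓ + 1 - m.1) (ℓ + 1) • (Nop L α k (m.1 + 1) (ℓ + 1) * Fc L α k m.1)
  decreasing_by exact Finset.mem_range.mp m.2

/-- Extension of a `d`-tuple `κ = (k₁,…,k_d)` to a 1-based sequence `ℕ → ℕ`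
(with `kfun d κ i = k_i` for `1 ≤ i ≤ d`). -/
def kfun (d : ℕ) (κ : Fin d → ℕ) : ℕ → ℕ :=
  fun i => if h : 1 ≤ i ∧ i ≤ d then κ ⟨i - 1, by omega⟩ else 0

/-- The `d`-times nested oscillatory integral `G_d(t) = T^d e^{tL} u₀`:
`G₀(t) = exp(tL)·u₀`, `G_d(t) = ∫₀ᵗ exp((t−τ)L)·α·e^{iωτ}·G_{d−1}(τ) dτ`. -/
def Gfun (L α u₀ : A) (ω : ℝ) : ℕ → ℝ → A
  | 0, t => NormedSpace.exp ((t : ℂ) • L) * u₀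
  | d+1, t => ∫ τ in (0:ℝ)..t,
      Complex.exp (Complex.I * ω * τ) •
        (NormedSpace.exp (((t - τ : ℝ) : ℂ) • L) * α * Gfun L α u₀ ω d τ)

/-- The finite series
`S_n^d(t) = Σ_{k∈ℕ^d, 0 ≤ |k^d| ≤ n−d} (iω)^{−(d+|k^d|)} ·
  Σ_{ℓ=0}^{d} a_{d−ℓ}^d · e^{(d−ℓ)iωt} · N(ℓ+1,d) · exp(tL) · F_ℓ · u₀`. -/
def Sser (L α u₀ : A) (ω : ℝ) (n d : ℕ) (t : ℝ) : A :=
  ∑ m ∈ Finset.range (n - d + 1), ∑ κ ∈ Finset.Nat.antidiagonalTuple d m,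
    ((Complex.I * ω) ^ (d + m))⁻¹ •
      ∑ ℓ ∈ Finset.range (d + 1),
        (coefA (kfun d κ) (d - ℓ) d *
            Complex.exp (((d - ℓ : ℕ) : ℂ) * (Complex.I * ω * t))) •
          (Nop L α (kfun d κ) (ℓ + 1) d *
            (NormedSpace.exp ((t : ℂ) • L) * (Fc L α (kfun d κ) ℓ * u₀)))

/-- The remainder: `E_n^0(t) = 0` and
`E_n^d(t) = (iω)^{−n} · Σ_{k∈ℕ^d, |k^d| = n−d+1} Σ_{ℓ=0}^{d−1} b_{d−ℓ}^d ·
  (∫₀ᵗ exp((t−τ)L)·N(ℓ+1,d)·exp(τL)·e^{(d−ℓ)iωτ} dτ) · F_ℓ · u₀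
  + ∫₀ᵗ exp((t−τ)L)·α·e^{iωτ}·E_n^{d−1}(τ) dτ`. -/
def Eser (L α u₀ : A) (ω : ℝ) (n : ℕ) : ℕ → ℝ → A
  | 0, _ => 0
  | d+1, t =>
    ((Complex.I * ω) ^ n)⁻¹ •
      (∑ κ ∈ Finset.Nat.antidiagonalTuple (d + 1) (n - (d + 1) + 1),
        ∑ ℓ ∈ Finset.range (d + 1),
          coefB (kfun (d + 1) κ) (d + 1 - ℓ) (d + 1) •
            ((∫ τ in (0:ℝ)..t,
                Complex.exp (((d + 1 - ℓ : ℕ) : ℂ) * (Complex.I * ω * τ)) •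
                  (NormedSpace.exp (((t - τ : ℝ) : ℂ) • L) *
                    Nop L α (kfun (d + 1) κ) (ℓ + 1) (d + 1) *
                    NormedSpace.exp ((τ : ℂ) • L))) *
              (Fc L α (kfun (d + 1) κ) ℓ * u₀)))
    + ∫ τ in (0:ℝ)..t,
        Complex.exp (Complex.I * ω * τ) •
          (NormedSpace.exp (((t - τ : ℝ) : ℂ) • L) * α * Eser L α u₀ ω n d τ)

/-!
Write `T f (t) = ∫₀ᵗ e^{iωτ} e^{(t-τ)L} α f(τ) dτ`, so that `G_{d+1} = T G_d` and, by induction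
on `d`, it suffices to show `T S_n^d = S_n^{d+1} + R`, where `R` is the first summand of
`E_n^{d+1}`. Applying `T` to the term of `S_n^d` indexed by `k` produces integrals
`∫₀ᵗ e^{cτ} e^{(t-τ)L} M e^{τL} dτ` with `c = (d+1-ℓ)iω`. Integrating by parts, such an integral
is `c⁻¹` times boundary terms plus the same integral with `M` replaced by `[L, M]`. After `j`
steps `M` is `ad_L^j(α N(ℓ+1,d))`, i.e. `N(ℓ+1,d+1)` for the multi-index `(k, j)`, and the boundary
terms are the `(k, j)`-term of `S_n^{d+1}` (those at `τ = 0` assemble into `F_{d+1}` by its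
recursion). Stopping when `|(k, j)| = n - d` leaves exactly the terms of `R`.
-/

open Finset NormedSpace

section Duhamel

variable {A : Type*} [NormedRing A] [NormedAlgebra ℂ A] [CompleteSpace A]

lemma hasDerivAt_exp_ofReal_smul (L : A) (s : ℝ) :
    HasDerivAt (fun u : ℝ => exp ((u : ℂ) • L)) (exp ((s : ℂ) • L) * L) s := by
  simpa only [Complex.coe_smul] using hasDerivAt_exp_smul_const (𝕂 := ℝ) L s

@[fun_prop]
lemma Continuous.exp_ofReal_smul {X : Type*} [TopologicalSpace X] {f : X → ℝ}
    (hf : Continuous f) (L : A) : Continuous (fun x => exp ((f x : ℂ) • L)) :=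
  (continuous_iff_continuousAt.2 fun s => (hasDerivAt_exp_ofReal_smul L s).continuousAt).comp hf

def duhamelIntegral (L M : A) (z : ℂ) (t : ℝ) : A :=
  ∫ τ in (0:ℝ)..t, Complex.exp (z * τ) • (exp (((t - τ : ℝ) : ℂ) • L) * M * exp ((τ : ℂ) • L))

lemma hasDerivAt_duhamelIntegrand (L M : A) (z : ℂ) (t τ : ℝ) :
    HasDerivAt (fun u : ℝ => Complex.exp (z * u) •
        (exp (((t - u : ℝ) : ℂ) • L) * M * exp ((u : ℂ) • L)))
      (z • (Complex.exp (z * τ) • (exp (((t - τ : ℝ) : ℂ) • L) * M * exp ((τ : ℂ) • L)))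
        - Complex.exp (z * τ) •
          (exp (((t - τ : ℝ) : ℂ) • L) * (L * M - M * L) * exp ((τ : ℂ) • L))) τ := by
  have hexp : HasDerivAt (fun u : ℝ => Complex.exp (z * u)) (z * Complex.exp (z * τ)) τ := by
    simpa [mul_comm] using ((hasDerivAt_id (τ : ℂ)).const_mul z).cexp.comp_ofReal
  have hrev : HasDerivAt (fun u : ℝ => exp (((t - u : ℝ) : ℂ) • L))
      ((-1 : ℝ) • (exp (((t - τ : ℝ) : ℂ) • L) * L)) τ :=
    (hasDerivAt_exp_ofReal_smul L (t - τ)).scomp τ ((hasDerivAt_id τ).const_sub t)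
  refine (hexp.smul ((hrev.mul_const M).mul (hasDerivAt_exp_ofReal_smul L τ))).congr_deriv ?_
  have hcomm : ∀ s : ℂ, L * exp (s • L) = exp (s • L) * L :=
    fun s => (((Commute.refl L).smul_left s).exp_left).symm
  simp only [Pi.mul_apply, neg_one_smul, neg_mul, mul_sub, sub_mul, hcomm, mul_assoc]
  module

/-- Integration by parts: `e^{(t-τ)L} M e^{τL}` has `τ`-derivative `-e^{(t-τ)L} [L, M] e^{τL}`. -/
lemma duhamelIntegral_eq (L M : A) {z : ℂ} (hz : z ≠ 0) (t : ℝ) :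
    duhamelIntegral L M z t = z⁻¹ • (Complex.exp (z * t) • (M * exp ((t : ℂ) • L))
      - exp ((t : ℂ) • L) * M + duhamelIntegral L (L * M - M * L) z t) := by
  have hftc := intervalIntegral.integral_eq_sub_of_hasDerivAt (a := 0) (b := t)
    (fun τ _ => hasDerivAt_duhamelIntegrand L M z t τ)
    ((by fun_prop : Continuous _).intervalIntegrable _ _)
  rw [intervalIntegral.integral_sub ((by fun_prop : Continuous _).intervalIntegrable _ _)
    ((by fun_prop : Continuous _).intervalIntegrable _ _), intervalIntegral.integral_smul] at hftc
  simp only [sub_self, sub_zero, Complex.ofReal_zero, zero_smul, exp_zero, mul_zero,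
    Complex.exp_zero, one_smul, mul_one, one_mul] at hftc
  rw [eq_inv_smul_iff₀ hz]
  unfold duhamelIntegral
  rw [← hftc]
  abel

end Duhamel

section Reindex

variable {M : Type*} [AddCommMonoid M]

lemma sum_antidiagonalTuple_succ_snoc (d N : ℕ) (f : (Fin (d + 1) → ℕ) → M) :
    ∑ κ ∈ Nat.antidiagonalTuple (d + 1) N, f κ
      = ∑ m ∈ range (N + 1), ∑ κ ∈ Nat.antidiagonalTuple d m, f (Fin.snoc κ (N - m)) := by
  rw [sum_sigma']
  symm
  have hsum (κ : Fin (d + 1) → ℕ) : ∑ i, κ i = ∑ i, Fin.init κ i + κ (Fin.last d) :=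
    Fin.sum_univ_castSucc κ
  refine sum_nbij' (fun p => Fin.snoc p.2 (N - p.1))
    (fun κ => ⟨∑ i, Fin.init κ i, Fin.init κ⟩) ?_ ?_ ?_ ?_ (fun _ _ => rfl)
  · rintro ⟨m, κ⟩ h
    simp only [mem_sigma, mem_range, Nat.mem_antidiagonalTuple] at h ⊢
    rw [hsum, Fin.init_snoc, Fin.snoc_last, h.2]
    omega
  · intro κ h
    simp only [Nat.mem_antidiagonalTuple, mem_sigma, mem_range] at h ⊢
    rw [hsum] at h
    exact ⟨by omega, trivial⟩
  · rintro ⟨m, κ⟩ h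
    simp only [mem_sigma, Nat.mem_antidiagonalTuple] at h
    simp [h.2]
  · intro κ h
    simp only [Nat.mem_antidiagonalTuple] at h
    rw [hsum] at h
    simp [← h]

lemma sum_range_sum_antidiagonalTuple_succ (d N : ℕ) (g : ℕ → (Fin (d + 1) → ℕ) → M) :
    ∑ m' ∈ range N, ∑ κ ∈ Nat.antidiagonalTuple (d + 1) m', g m' κ
      = ∑ m ∈ range (N + 1), ∑ κ ∈ Nat.antidiagonalTuple d m,
          ∑ j ∈ range (N - m), g (m + j) (Fin.snoc κ j) := by
  simp_rw [sum_antidiagonalTuple_succ_snoc]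
  rw [sum_comm' (s' := fun m => Ico m N) (t' := range (N + 1))
    (fun m' m => by simp only [mem_range, mem_Ico]; omega)]
  refine sum_congr rfl fun m _ => ?_
  rw [sum_Ico_eq_sum_range, sum_comm]
  simp only [add_tsub_cancel_left]

end Reindex

section Snoc

variable {A : Type*} [NormedRing A] (L α : A)

lemma kfun_snoc_of_le {d : ℕ} (κ : Fin d → ℕ) (j : ℕ) {i : ℕ} (hi : i ≤ d) :
    kfun (d + 1) (Fin.snoc κ j) i = kfun d κ i := by
  unfold kfun
  by_cases h : 1 ≤ i ∧ i ≤ d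
  · rw [dif_pos ⟨h.1, by omega⟩, dif_pos h]
    exact Fin.snoc_castSucc (α := fun _ => ℕ) (i := ⟨i - 1, by omega⟩) ..
  · rw [dif_neg (by omega), dif_neg h]

lemma kfun_snoc_last {d : ℕ} (κ : Fin d → ℕ) (j : ℕ) :
    kfun (d + 1) (Fin.snoc κ j) (d + 1) = j := by
  simp [kfun, Fin.snoc, Fin.last]

lemma coefA_zero (k : ℕ → ℕ) (l : ℕ) : coefA k 0 l = 1 := prod_range_zero _

lemma coefA_congr {k k' : ℕ → ℕ} (j l : ℕ) (h : ∀ r < j, k (l - r) = k' (l - r)) :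
    coefA k j l = coefA k' j l :=
  prod_congr rfl fun r hr => by rw [h r (mem_range.mp hr)]

lemma coefA_snoc {d : ℕ} (κ : Fin d → ℕ) (j : ℕ) {l : ℕ} (hl : l ≤ d) :
    coefA (kfun (d + 1) (Fin.snoc κ j)) (d + 1 - l) (d + 1)
      = (((d + 1 - l : ℕ) : ℂ) ^ (j + 1))⁻¹ * coefA (kfun d κ) (d - l) d := by
  unfold coefA
  rw [show d + 1 - l = d - l + 1 by omega, prod_range_succ', mul_comm]
  congr 1
  · rw [Nat.sub_zero, Nat.sub_zero, kfun_snoc_last]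
  · refine prod_congr rfl fun r hr => ?_
    have := mem_range.mp hr
    rw [show d + 1 - (r + 1) = d - r by omega, kfun_snoc_of_le κ j (by omega),
      show d - l + 1 - (r + 1) = d - l - r by omega]

lemma coefB_snoc {d : ℕ} (κ : Fin d → ℕ) (j : ℕ) {l : ℕ} (hl : l ≤ d) :
    coefB (kfun (d + 1) (Fin.snoc κ j)) (d + 1 - l) (d + 1)
      = (((d + 1 - l : ℕ) : ℂ) ^ j)⁻¹ * coefA (kfun d κ) (d - l) d := by
  unfold coefB coefA
  rw [if_neg (by omega), kfun_snoc_last, prod_Ico_eq_prod_range,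
    show d + 1 - l - 1 = d - l by omega]
  congr 1
  refine prod_congr rfl fun r hr => ?_
  have := mem_range.mp hr
  rw [show d + 1 - (1 + r) = d - r by omega, kfun_snoc_of_le κ j (by omega),
    show d + 1 - l - (1 + r) = d - l - r by omega]

lemma Nop_of_lt (k : ℕ → ℕ) {l r : ℕ} (h : r < l) : Nop L α k l r = 1 := by
  cases r with
  | zero => simp [Nop, show l ≠ 0 by omega]
  | succ r => simp [Nop, h]

lemma Nop_congr {k k' : ℕ → ℕ} (l r : ℕ) (h : ∀ i ≤ r, k i = k' i) :
    Nop L α k l r = Nop L α k' l r := by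
  induction r with
  | zero => simp only [Nop, h 0 le_rfl]
  | succ r ih => simp only [Nop, h (r + 1) le_rfl, ih fun i hi => h i (by omega)]

lemma Nop_snoc {d : ℕ} (κ : Fin d → ℕ) (j : ℕ) {l : ℕ} (hl : l ≤ d) :
    Nop L α (kfun (d + 1) (Fin.snoc κ j)) (l + 1) (d + 1)
      = adL L j (α * Nop L α (kfun d κ) (l + 1) d) := by
  rcases hl.eq_or_lt with rfl | hlt
  · simp [Nop, Nop_of_lt L α _ (Nat.lt_succ_self l), kfun_snoc_last]
  · simp only [Nop, kfun_snoc_last, if_neg (show ¬ d + 1 < l + 1 by omega),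
      if_neg (show l + 1 ≠ d + 1 by omega)]
    rw [Nop_congr L α _ _ fun i hi => kfun_snoc_of_le κ j hi]

variable [NormedAlgebra ℂ A]

lemma Fc_succ (k : ℕ → ℕ) (l : ℕ) :
    Fc L α k (l + 1) = -∑ m ∈ range (l + 1),
      coefA k (l + 1 - m) (l + 1) • (Nop L α k (m + 1) (l + 1) * Fc L α k m) := by
  rw [Fc, sum_attach (range (l + 1))
    fun m => coefA k (l + 1 - m) (l + 1) • (Nop L α k (m + 1) (l + 1) * Fc L α k m)]

lemma Fc_congr {k k' : ℕ → ℕ} (l : ℕ) (h : ∀ i ≤ l, k i = k' i) : Fc L α k l = Fc L α k' l := by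
  induction l using Nat.strong_induction_on with
  | _ l ih =>
    cases l with
    | zero => simp [Fc]
    | succ l =>
      rw [Fc_succ, Fc_succ]
      refine congrArg _ (sum_congr rfl fun m hm => ?_)
      have := mem_range.mp hm
      rw [coefA_congr _ _ fun r _ => h _ (by omega), Nop_congr L α _ _ h,
        ih m (by omega) fun i _ => h i (by omega)]

lemma Fc_snoc {d : ℕ} (κ : Fin d → ℕ) (j : ℕ) {l : ℕ} (hl : l ≤ d) :
    Fc L α (kfun (d + 1) (Fin.snoc κ j)) l = Fc L α (kfun d κ) l :=
  Fc_congr L α l fun _ hi => kfun_snoc_of_le κ j (hi.trans hl)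

end Snoc

section Expansion

variable {A : Type*} [NormedRing A] [NormedAlgebra ℂ A] (L α u₀ : A) (ω : ℝ)

def oscillatoryVolterra (f : ℝ → A) (t : ℝ) : A :=
  ∫ τ in (0:ℝ)..t, Complex.exp (Complex.I * ω * τ) • (exp (((t - τ : ℝ) : ℂ) • L) * α * f τ)

def seriesTerm {d : ℕ} (κ : Fin d → ℕ) (t : ℝ) : A :=
  ∑ ℓ ∈ range (d + 1),
    (coefA (kfun d κ) (d - ℓ) d * Complex.exp (((d - ℓ : ℕ) : ℂ) * (Complex.I * ω * t))) •
      (Nop L α (kfun d κ) (ℓ + 1) d * (exp ((t : ℂ) • L) * (Fc L α (kfun d κ) ℓ * u₀)))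

def remainderTerm {d : ℕ} (κ : Fin (d + 1) → ℕ) (t : ℝ) : A :=
  ∑ ℓ ∈ range (d + 1), coefB (kfun (d + 1) κ) (d + 1 - ℓ) (d + 1) •
    (duhamelIntegral L (Nop L α (kfun (d + 1) κ) (ℓ + 1) (d + 1))
        (((d + 1 - ℓ : ℕ) : ℂ) * (Complex.I * ω)) t * (Fc L α (kfun (d + 1) κ) ℓ * u₀))

lemma Gfun_succ (d : ℕ) :
    Gfun L α u₀ ω (d + 1) = oscillatoryVolterra L α ω (Gfun L α u₀ ω d) := rfl

lemma Sser_eq_sum_seriesTerm (n d : ℕ) (t : ℝ) :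
    Sser L α u₀ ω n d t = ∑ m ∈ range (n - d + 1), ∑ κ ∈ Nat.antidiagonalTuple d m,
      ((Complex.I * ω) ^ (d + m))⁻¹ • seriesTerm L α u₀ ω κ t := rfl

lemma Eser_succ (n d : ℕ) (t : ℝ) :
    Eser L α u₀ ω n (d + 1) t = ((Complex.I * ω) ^ n)⁻¹ •
        ∑ κ ∈ Nat.antidiagonalTuple (d + 1) (n - (d + 1) + 1), remainderTerm L α u₀ ω κ t
      + oscillatoryVolterra L α ω (Eser L α u₀ ω n d) t := by
  simp only [Eser, remainderTerm, duhamelIntegral, oscillatoryVolterra, mul_assoc]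

lemma Sser_zero (n : ℕ) (t : ℝ) : Sser L α u₀ ω n 0 t = exp ((t : ℂ) • L) * u₀ := by
  simp [Sser, Nat.antidiagonalTuple_zero_right, coefA, Nop, Fc, sum_range_succ']

lemma oscillatoryVolterra_smul (c : ℂ) (f : ℝ → A) (t : ℝ) :
    oscillatoryVolterra L α ω (fun τ => c • f τ) t = c • oscillatoryVolterra L α ω f t := by
  simp only [oscillatoryVolterra, mul_smul_comm, smul_comm _ c]
  exact intervalIntegral.integral_smul c _

/-- The top term `ℓ = d + 1` of `seriesTerm` is `e^{tL} F_{d+1} u₀`; unfolding `F_{d+1}` pairs it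
with the other terms into the boundary terms of `duhamelIntegral_eq`. -/
lemma seriesTerm_eq_sum_boundary {d : ℕ} (κ : Fin (d + 1) → ℕ) (t : ℝ) :
    seriesTerm L α u₀ ω κ t = ∑ ℓ ∈ range (d + 1), coefA (kfun (d + 1) κ) (d + 1 - ℓ) (d + 1) •
      ((Complex.exp ((((d + 1 - ℓ : ℕ) : ℂ) * (Complex.I * ω)) * t) •
          (Nop L α (kfun (d + 1) κ) (ℓ + 1) (d + 1) * exp ((t : ℂ) • L))
        - exp ((t : ℂ) • L) * Nop L α (kfun (d + 1) κ) (ℓ + 1) (d + 1))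
        * (Fc L α (kfun (d + 1) κ) ℓ * u₀)) := by
  rw [seriesTerm, sum_range_succ, Nop_of_lt L α _ (Nat.lt_succ_self _), Fc_succ]
  simp only [Nat.sub_self, coefA_zero, Nat.cast_zero, zero_mul,
    Complex.exp_zero, mul_one, one_smul, one_mul, neg_mul, mul_neg, mul_sum, sum_mul,
    mul_smul_comm, ← sum_neg_distrib, ← sum_add_distrib, smul_sub, sub_mul, smul_mul_assoc]
  refine sum_congr rfl fun ℓ _ => ?_
  simp only [mul_assoc, smul_smul, ← sub_eq_add_neg]

variable [CompleteSpace A]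

lemma continuous_oscillatoryVolterraIntegrand {f : ℝ → A} (hf : Continuous f) (t : ℝ) :
    Continuous fun τ : ℝ =>
      Complex.exp (Complex.I * ω * τ) • (exp (((t - τ : ℝ) : ℂ) • L) * α * f τ) := by
  fun_prop

lemma oscillatoryVolterra_add {f g : ℝ → A} (hf : Continuous f) (hg : Continuous g) (t : ℝ) :
    oscillatoryVolterra L α ω (f + g) t
      = oscillatoryVolterra L α ω f t + oscillatoryVolterra L α ω g t := by
  simp only [oscillatoryVolterra, Pi.add_apply, mul_add, smul_add]
  exact intervalIntegral.integral_add
    ((continuous_oscillatoryVolterraIntegrand L α ω hf t).intervalIntegrable _ _)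
    ((continuous_oscillatoryVolterraIntegrand L α ω hg t).intervalIntegrable _ _)

lemma oscillatoryVolterra_sum {ι : Type*} (s : Finset ι) {f : ι → ℝ → A}
    (hf : ∀ i ∈ s, Continuous (f i)) (t : ℝ) :
    oscillatoryVolterra L α ω (fun τ => ∑ i ∈ s, f i τ) t
      = ∑ i ∈ s, oscillatoryVolterra L α ω (f i) t := by
  simp only [oscillatoryVolterra, mul_sum, smul_sum]
  exact intervalIntegral.integral_finsetSum fun i hi =>
    (continuous_oscillatoryVolterraIntegrand L α ω (hf i hi) t).intervalIntegrable _ _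

lemma continuous_Gfun (d : ℕ) : Continuous (Gfun L α u₀ ω d) := by
  induction d with
  | zero => exact (continuous_id.exp_ofReal_smul L).mul continuous_const
  | succ d ih =>
    exact intervalIntegral.continuous_parametric_intervalIntegral_of_continuous
      (f := fun t τ => Complex.exp (Complex.I * ω * τ) •
        (exp (((t - τ : ℝ) : ℂ) • L) * α * Gfun L α u₀ ω d τ)) (by fun_prop) continuous_id

lemma continuous_seriesTerm {d : ℕ} (κ : Fin d → ℕ) :
    Continuous (seriesTerm L α u₀ ω κ) := by
  unfold seriesTerm
  fun_prop

lemma continuous_Sser (n d : ℕ) : Continuous (Sser L α u₀ ω n d) := by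
  simp only [funext (Sser_eq_sum_seriesTerm L α u₀ ω n d)]
  exact continuous_finsetSum _ fun m _ => continuous_finsetSum _ fun κ _ =>
    (continuous_seriesTerm L α u₀ ω κ).const_smul _

lemma remainderTerm_snoc {ω : ℝ} (hω : ω ≠ 0) {d : ℕ} (κ : Fin d → ℕ) (j : ℕ) (t : ℝ) :
    remainderTerm L α u₀ ω (Fin.snoc κ j : Fin (d + 1) → ℕ) t = (Complex.I * ω)⁻¹ •
      (seriesTerm L α u₀ ω (Fin.snoc κ j : Fin (d + 1) → ℕ) t
        + remainderTerm L α u₀ ω (Fin.snoc κ (j + 1) : Fin (d + 1) → ℕ) t) := by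
  rw [seriesTerm_eq_sum_boundary, remainderTerm, remainderTerm, ← sum_add_distrib, smul_sum]
  refine sum_congr rfl fun ℓ hℓ => ?_
  have hℓd : ℓ ≤ d := Nat.lt_succ_iff.mp (mem_range.mp hℓ)
  have hIω : Complex.I * ω ≠ 0 := mul_ne_zero Complex.I_ne_zero (Complex.ofReal_ne_zero.mpr hω)
  have hz : ((d + 1 - ℓ : ℕ) : ℂ) * (Complex.I * ω) ≠ 0 :=
    mul_ne_zero (Nat.cast_ne_zero.mpr (by omega)) hIω
  have hNop : Nop L α (kfun (d + 1) (Fin.snoc κ (j + 1))) (ℓ + 1) (d + 1)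
      = L * Nop L α (kfun (d + 1) (Fin.snoc κ j)) (ℓ + 1) (d + 1)
        - Nop L α (kfun (d + 1) (Fin.snoc κ j)) (ℓ + 1) (d + 1) * L := by
    rw [Nop_snoc L α κ _ hℓd, Nop_snoc L α κ _ hℓd, adL]
  have hFc : Fc L α (kfun (d + 1) (Fin.snoc κ (j + 1))) ℓ
      = Fc L α (kfun (d + 1) (Fin.snoc κ j)) ℓ := by
    rw [Fc_snoc L α κ _ hℓd, Fc_snoc L α κ _ hℓd]
  have hcoef : coefB (kfun (d + 1) (Fin.snoc κ (j + 1))) (d + 1 - ℓ) (d + 1)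
      = coefA (kfun (d + 1) (Fin.snoc κ j)) (d + 1 - ℓ) (d + 1) := by
    rw [coefB_snoc κ _ hℓd, coefA_snoc κ _ hℓd]
  have hcoef' : coefB (kfun (d + 1) (Fin.snoc κ j)) (d + 1 - ℓ) (d + 1)
      * (((d + 1 - ℓ : ℕ) : ℂ) * (Complex.I * ω))⁻¹
      = (Complex.I * ω)⁻¹ * coefA (kfun (d + 1) (Fin.snoc κ j)) (d + 1 - ℓ) (d + 1) := by
    rw [coefB_snoc κ _ hℓd, coefA_snoc κ _ hℓd, pow_succ, mul_inv, mul_inv]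
    ring
  rw [duhamelIntegral_eq _ _ hz, hNop, hFc, hcoef, smul_mul_assoc, smul_smul, hcoef', add_mul,
    smul_add, smul_add, ← smul_smul, ← smul_smul]

lemma oscillatoryVolterra_exp_smul (k : ℕ) (N Y : A) (t : ℝ) :
    oscillatoryVolterra L α ω
        (fun τ => Complex.exp ((k : ℂ) * (Complex.I * ω * τ)) • (N * (exp ((τ : ℂ) • L) * Y))) t
      = duhamelIntegral L (α * N) (((k + 1 : ℕ) : ℂ) * (Complex.I * ω)) t * Y := by
  have hcont : Continuous fun τ : ℝ => Complex.exp (((k + 1 : ℕ) : ℂ) * (Complex.I * ω) * τ) •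
      (exp (((t - τ : ℝ) : ℂ) • L) * (α * N) * exp ((τ : ℂ) • L)) := by
    fun_prop
  have hint := ((ContinuousLinearMap.mul ℂ A).flip Y).intervalIntegral_comp_comm
    (hcont.intervalIntegrable (μ := MeasureTheory.volume) 0 t)
  simp only [ContinuousLinearMap.flip_apply, ContinuousLinearMap.mul_apply'] at hint
  rw [duhamelIntegral, ← hint, oscillatoryVolterra]
  refine intervalIntegral.integral_congr fun τ _ => ?_
  simp only [smul_mul_assoc, mul_smul_comm, smul_smul, ← Complex.exp_add, mul_assoc]
  congr 2
  push_cast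
  ring

lemma oscillatoryVolterra_seriesTerm {d : ℕ} (κ : Fin d → ℕ) (t : ℝ) :
    oscillatoryVolterra L α ω (seriesTerm L α u₀ ω κ) t
      = remainderTerm L α u₀ ω (Fin.snoc κ 0 : Fin (d + 1) → ℕ) t := by
  unfold seriesTerm
  simp only [mul_smul]
  rw [oscillatoryVolterra_sum _ _ _ _ (fun ℓ _ => by fun_prop)]
  refine sum_congr rfl fun ℓ hℓ => ?_
  have hℓd : ℓ ≤ d := Nat.lt_succ_iff.mp (mem_range.mp hℓ)
  rw [oscillatoryVolterra_smul, oscillatoryVolterra_exp_smul, coefB_snoc κ 0 hℓd,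
    Nop_snoc L α κ 0 hℓd, Fc_snoc L α κ 0 hℓd, pow_zero, inv_one, one_mul, adL,
    show d - ℓ + 1 = d + 1 - ℓ by omega]

lemma oscillatoryVolterra_seriesTerm_eq_sum {ω : ℝ} (hω : ω ≠ 0) {d : ℕ} (κ : Fin d → ℕ)
    (N : ℕ) (t : ℝ) :
    oscillatoryVolterra L α ω (seriesTerm L α u₀ ω κ) t
      = ∑ j ∈ range N, ((Complex.I * ω) ^ (j + 1))⁻¹ •
            seriesTerm L α u₀ ω (Fin.snoc κ j : Fin (d + 1) → ℕ) t
        + ((Complex.I * ω) ^ N)⁻¹ • remainderTerm L α u₀ ω (Fin.snoc κ N : Fin (d + 1) → ℕ) t := by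
  induction N with
  | zero => simp [oscillatoryVolterra_seriesTerm]
  | succ N ih =>
    rw [ih, remainderTerm_snoc L α u₀ hω, sum_range_succ, smul_smul, ← mul_inv, ← pow_succ,
      smul_add, add_assoc]

lemma oscillatoryVolterra_Sser {ω : ℝ} (hω : ω ≠ 0) {n d : ℕ} (hdn : d < n) (t : ℝ) :
    oscillatoryVolterra L α ω (Sser L α u₀ ω n d) t
      = Sser L α u₀ ω n (d + 1) t + ((Complex.I * ω) ^ n)⁻¹ •
          ∑ κ ∈ Nat.antidiagonalTuple (d + 1) (n - (d + 1) + 1), remainderTerm L α u₀ ω κ t := by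
  have hS (κ : Fin d → ℕ) (c : ℂ) : Continuous fun τ => c • seriesTerm L α u₀ ω κ τ :=
    (continuous_seriesTerm L α u₀ ω κ).const_smul c
  rw [funext (Sser_eq_sum_seriesTerm L α u₀ ω n d), oscillatoryVolterra_sum _ _ _ _
    fun m _ => continuous_finsetSum _ fun κ _ => hS κ _]
  simp_rw [oscillatoryVolterra_sum _ _ _ _ fun κ _ => hS κ _, oscillatoryVolterra_smul]
  rw [Sser_eq_sum_seriesTerm, show n - (d + 1) + 1 = n - d by omega,
    sum_range_sum_antidiagonalTuple_succ, sum_antidiagonalTuple_succ_snoc, smul_sum,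
    ← sum_add_distrib]
  refine sum_congr rfl fun m hm => ?_
  have hmn : m ≤ n - d := Nat.lt_succ_iff.mp (mem_range.mp hm)
  rw [smul_sum, ← sum_add_distrib]
  refine sum_congr rfl fun κ _ => ?_
  rw [oscillatoryVolterra_seriesTerm_eq_sum L α u₀ hω κ (n - d - m), smul_add, smul_sum,
    smul_smul, ← mul_inv, ← pow_add, show d + m + (n - d - m) = n by omega]
  congr 1
  refine sum_congr rfl fun j _ => ?_
  rw [smul_smul, ← mul_inv, ← pow_add, show d + m + (j + 1) = d + 1 + (m + j) by omega]

end Expansion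

theorem stmt11_general (L α u₀ : A) (ω : ℝ) (hω : 0 < ω)
    (d n : ℕ) (hnd : d ≤ n) (t : ℝ) :
    Gfun L α u₀ ω d t = Sser L α u₀ ω n d t + Eser L α u₀ ω n d t := by
  induction d generalizing t with
  | zero => simp [Gfun, Sser_zero, Eser]
  | succ d ih =>
    have hG : Gfun L α u₀ ω d = Sser L α u₀ ω n d + Eser L α u₀ ω n d := funext (ih (by omega))
    have hE : Continuous (Eser L α u₀ ω n d) := by
      simpa [hG] using (continuous_Gfun L α u₀ ω d).sub (continuous_Sser L α u₀ ω n d)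
    rw [Gfun_succ, hG, oscillatoryVolterra_add _ _ _ (continuous_Sser L α u₀ ω n d) hE,
      oscillatoryVolterra_Sser L α u₀ hω.ne' hnd, Eser_succ, add_assoc]

/-- For every `d ≥ 1` and `n ≥ d`, and every `t ∈ [0,t*]`, the nested
oscillatory integral admits the exact decomposition `G_d(t) = S_n^d(t) + E_n^d(t)`. -/
theorem stmt11 (L α u₀ : A) (T : ℝ) (hT : 0 < T) (ω : ℝ) (hω : 0 < ω)
    (d n : ℕ) (hd : 1 ≤ d) (hnd : d ≤ n) (t : ℝ) (ht : t ∈ Set.Icc (0:ℝ) T) :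
    Gfun L α u₀ ω d t = Sser L α u₀ ω n d t + Eser L α u₀ ω n d t :=
  stmt11_general L α u₀ ω hω d n hnd t
end
end

section
/- For every natural numbers d ≥ 1 and n with n ≥ d, there exists a constant C̄ ≥ 0, independent of ω, such that for all real ω ≥ 1, sup_{t∈[0,t*]} ‖S_n^d(t)‖ ≤ C̄·ω^{−d}. -/
noncomputable section

variable {A : Type*} [NormedRing A] [NormedAlgebra ℂ A] [CompleteSpace A]

/-! Every term of `S_n^d(t)` carries the factor `(iω)^{-(d+|k|)}`, of norm at most `ω^{-d}`
when `ω ≥ 1`; the remaining factors are unimodular phases `e^{jiωt}`, which drop out, and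
`exp(tL)`, which is bounded on `[0, T]` by compactness. -/

lemma exists_bound_norm_exp_smul_Icc (L : A) (T : ℝ) :
    ∃ M, 0 ≤ M ∧ ∀ t ∈ Set.Icc (0:ℝ) T, ‖NormedSpace.exp ((t : ℂ) • L)‖ ≤ M := by
  -- the continuity of `NormedSpace.exp` is stated over `ℚ`
  let _ : NormedAlgebra ℚ A := NormedAlgebra.restrictScalars ℚ ℂ A
  obtain ⟨M, hM⟩ := isCompact_Icc.exists_bound_of_continuousOn
    (by fun_prop : Continuous fun t : ℝ => NormedSpace.exp ((t : ℂ) • L)).continuousOn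
  exact ⟨max M 0, le_max_right _ _, fun t ht => (hM t ht).trans (le_max_left _ _)⟩

lemma norm_exp_natCast_mul_I_mul (k : ℕ) (ω t : ℝ) :
    ‖Complex.exp ((k : ℂ) * (Complex.I * ω * t))‖ = 1 := by
  rw [show (k : ℂ) * (Complex.I * ω * t) = ((k * ω * t : ℝ) : ℂ) * Complex.I by push_cast; ring]
  exact Complex.norm_exp_ofReal_mul_I _

lemma norm_inv_I_mul_pow_le {ω : ℝ} (hω : 1 ≤ ω) (d m : ℕ) :
    ‖((Complex.I * ω) ^ (d + m))⁻¹‖ ≤ (ω ^ d)⁻¹ := by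
  rw [norm_inv, norm_pow, norm_mul, Complex.norm_I, one_mul, Complex.norm_real,
    Real.norm_of_nonneg (by linarith)]
  exact inv_anti₀ (by positivity) (pow_le_pow_right₀ hω (Nat.le_add_right d m))

theorem stmt12_general (L α u₀ : A) (T : ℝ)
    (d n : ℕ) :
    ∃ C : ℝ, 0 ≤ C ∧ ∀ ω : ℝ, 1 ≤ ω → ∀ t ∈ Set.Icc (0:ℝ) T,
      ‖Sser L α u₀ ω n d t‖ ≤ C * (ω ^ d)⁻¹ := by
  obtain ⟨M, hM0, hM⟩ := exists_bound_norm_exp_smul_Icc L T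
  refine ⟨∑ m ∈ Finset.range (n - d + 1), ∑ κ ∈ Finset.Nat.antidiagonalTuple d m,
      ∑ ℓ ∈ Finset.range (d + 1), ‖coefA (kfun d κ) (d - ℓ) d‖ *
        (‖Nop L α (kfun d κ) (ℓ + 1) d‖ * (M * ‖Fc L α (kfun d κ) ℓ * u₀‖)),
    by positivity, fun ω hω t ht => ?_⟩
  rw [Sser, Finset.sum_mul]
  refine (norm_sum_le _ _).trans (Finset.sum_le_sum fun m _ => ?_)
  rw [Finset.sum_mul]
  refine (norm_sum_le _ _).trans (Finset.sum_le_sum fun κ _ => ?_)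
  rw [norm_smul, mul_comm _ (ω ^ d)⁻¹]
  gcongr
  · exact norm_inv_I_mul_pow_le hω d m
  refine (norm_sum_le _ _).trans (Finset.sum_le_sum fun ℓ _ => ?_)
  rw [norm_smul, norm_mul, norm_exp_natCast_mul_I_mul, mul_one]
  gcongr
  refine (norm_mul_le _ _).trans ?_
  gcongr
  refine (norm_mul_le _ _).trans ?_
  gcongr
  exact hM t ht

/-- For every `d ≥ 1` and `n ≥ d`, there exists a constant `C̄ ≥ 0`,
independent of `ω`, such that for all real `ω ≥ 1`,
`sup_{t∈[0,t*]} ‖S_n^d(t)‖ ≤ C̄·ω^{−d}`. -/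
theorem stmt12 (L α u₀ : A) (T : ℝ) (hT : 0 < T)
    (d n : ℕ) (hd : 1 ≤ d) (hnd : d ≤ n) :
    ∃ C : ℝ, 0 ≤ C ∧ ∀ ω : ℝ, 1 ≤ ω → ∀ t ∈ Set.Icc (0:ℝ) T,
      ‖Sser L α u₀ ω n d t‖ ≤ C * (ω ^ d)⁻¹ :=
  stmt12_general L α u₀ T d n
end
end

section
/- For every natural number d ≥ 1, there exists a constant C ≥ 0, independent of ω, such that for all real ω ≥ 1, sup_{t∈[0,t*]} ‖G_d(t)‖ ≤ C·ω^{−d}. -/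
noncomputable section

variable {A : Type*} [NormedRing A] [NormedAlgebra ℂ A] [CompleteSpace A]

/-!
Conjugating by the flow, `G_d(t) = e^{tL} K_d(t)` with `K₀ = u₀` and
`K_{d+1}(t) = ∫₀ᵗ e^{iωτ} α(τ) K_d(τ) dτ`, where `α(τ) = e^{-τL} α e^{τL}`.
An integral `∫₀ᵗ e^{iμωτ} b(τ) K_d(τ) dτ` with `b` of class `C¹` and `μ ≥ 1` is integrated by
parts, integrating the exponential. This gains a factor `1/(μω)`; the boundary terms and the term
with `b'` are `O(ω^{-d})` by the bound on `K_d`, and the term with `K_d'` is an integral of the same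
shape one level down, with `b·α(·)` in place of `b` and frequency `μ + 1`. Induction on `d` then
gives `K_d = O(ω^{-d})` uniformly on `[0, T]`.
-/

open intervalIntegral

theorem norm_exp_I_mul_ofReal_mul_ofReal (ν τ : ℝ) : ‖Complex.exp (Complex.I * ν * τ)‖ = 1 := by
  rw [mul_assoc, ← Complex.ofReal_mul, Complex.norm_exp_I_mul_ofReal]

theorem norm_integral_exp_I_mul_smul_le_mul {E : Type*} [NormedAddCommGroup E] [NormedSpace ℂ E]
    {f : ℝ → E} {T M t : ℝ} (ν : ℝ) (hf : ∀ s ∈ Set.Icc 0 T, ‖f s‖ ≤ M)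
    (ht : t ∈ Set.Icc 0 T) :
    ‖∫ τ in (0:ℝ)..t, Complex.exp (Complex.I * ν * τ) • f τ‖ ≤ T * M := by
  have hbound : ∀ s ∈ Set.uIoc 0 t, ‖Complex.exp (Complex.I * ν * s) • f s‖ ≤ M := by
    intro s hs
    rw [Set.uIoc_of_le ht.1] at hs
    rw [norm_smul, norm_exp_I_mul_ofReal_mul_ofReal, one_mul]
    exact hf s ⟨hs.1.le, hs.2.trans ht.2⟩
  calc _ ≤ M * |t - 0| := norm_integral_le_of_norm_le_const hbound
    _ ≤ M * T := by
        rw [sub_zero, abs_of_nonneg ht.1]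
        exact mul_le_mul_of_nonneg_left ht.2 ((norm_nonneg _).trans (hf t ht))
    _ = T * M := mul_comm _ _

section Oscillatory

variable {E : Type*} [NormedAddCommGroup E] [NormedSpace ℂ E] [CompleteSpace E] {g g' : ℝ → E}

theorem smul_integral_exp_mul_smul (c : ℂ) (hg : ∀ τ, HasDerivAt g (g' τ) τ)
    (hg' : Continuous g') (t : ℝ) :
    c • ∫ τ in (0:ℝ)..t, Complex.exp (c * τ) • g τ =
      Complex.exp (c * t) • g t - g 0 - ∫ τ in (0:ℝ)..t, Complex.exp (c * τ) • g' τ := by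
  have he : ∀ τ : ℝ,
      HasDerivAt (fun x : ℝ => Complex.exp (c * x)) (c * Complex.exp (c * τ)) τ := fun τ => by
    simpa [mul_comm] using ((hasDerivAt_id (τ : ℂ)).const_mul c).cexp.comp_ofReal
  have hc : Continuous fun τ : ℝ => c * Complex.exp (c * τ) := by fun_prop
  rw [integral_smul_deriv_eq_deriv_smul (fun τ _ => he τ) (fun τ _ => hg τ)
      (hc.intervalIntegrable _ _) (hg'.intervalIntegrable _ _), ← integral_smul]
  simp only [Complex.ofReal_zero, mul_zero, Complex.exp_zero, one_smul, smul_smul]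
  abel

theorem abs_mul_norm_integral_exp_I_mul_smul_le (ν : ℝ) (hg : ∀ τ, HasDerivAt g (g' τ) τ)
    (hg' : Continuous g') (t : ℝ) :
    |ν| * ‖∫ τ in (0:ℝ)..t, Complex.exp (Complex.I * ν * τ) • g τ‖ ≤
      ‖g t‖ + ‖g 0‖ + ‖∫ τ in (0:ℝ)..t, Complex.exp (Complex.I * ν * τ) • g' τ‖ := by
  have hnorm : |ν| = ‖Complex.I * ν‖ := by simp
  rw [hnorm, ← norm_smul, smul_integral_exp_mul_smul _ hg hg']
  refine (norm_sub_le _ _).trans (add_le_add ((norm_sub_le _ _).trans_eq ?_) le_rfl)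
  rw [norm_smul, norm_exp_I_mul_ofReal_mul_ofReal, one_mul]

end Oscillatory

def IsBigOInvPow {E : Type*} [Norm E] (T : ℝ) (k : ℕ) (F : ℝ → ℝ → E) : Prop :=
  ∃ C, ∀ ω, 1 ≤ ω → ∀ t ∈ Set.Icc 0 T, ‖F ω t‖ ≤ C * (ω ^ k)⁻¹

theorem IsBigOInvPow.mul_left {R : Type*} [NormedRing R] {T : ℝ} {k : ℕ} {F : ℝ → ℝ → R}
    {f : ℝ → R} (hf : Continuous f) (hF : IsBigOInvPow T k F) :
    IsBigOInvPow T k fun ω t => f t * F ω t := by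
  obtain ⟨C, hC⟩ := hF
  obtain ⟨M, hM⟩ := (isCompact_Icc (a := 0) (b := T)).exists_bound_of_continuousOn
    hf.continuousOn
  refine ⟨M * C, fun ω hω t ht => ?_⟩
  have hM0 : 0 ≤ M := (norm_nonneg _).trans (hM t ht)
  calc ‖f t * F ω t‖ ≤ M * (C * (ω ^ k)⁻¹) :=
        (norm_mul_le _ _).trans (mul_le_mul (hM t ht) (hC ω hω t ht) (norm_nonneg _) hM0)
    _ = M * C * (ω ^ k)⁻¹ := (mul_assoc _ _ _).symm

theorem IsBigOInvPow.integral_exp_I_mul_smul {T : ℝ} {k : ℕ} {u u' : ℝ → ℝ → A}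
    (hu : ∀ ω τ, HasDerivAt (u ω) (u' ω τ) τ) (hu' : ∀ ω, Continuous (u' ω))
    {b : ℝ → A} (hb : ContDiff ℝ 1 b) {μ : ℝ} (hμ : 1 ≤ μ) (hO : IsBigOInvPow T k u)
    (hO' : IsBigOInvPow T k fun ω t =>
      ∫ τ in (0:ℝ)..t, Complex.exp (Complex.I * ↑(μ * ω) * τ) • (b τ * u' ω τ)) :
    IsBigOInvPow T (k + 1) fun ω t =>
      ∫ τ in (0:ℝ)..t, Complex.exp (Complex.I * ↑(μ * ω) * τ) • (b τ * u ω τ) := by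
  have hb' : Continuous (deriv b) := hb.continuous_deriv le_rfl
  obtain ⟨C₁, hC₁⟩ := hO.mul_left hb.continuous
  obtain ⟨C₂, hC₂⟩ := hO.mul_left hb'
  obtain ⟨C₃, hC₃⟩ := hO'
  refine ⟨2 * C₁ + T * C₂ + C₃, fun ω hω t ht => ?_⟩
  have hu_cont : Continuous (u ω) := continuous_iff_continuousAt.2 fun τ => (hu ω τ).continuousAt
  set e : ℝ → ℂ := fun τ => Complex.exp (Complex.I * ↑(μ * ω) * τ)
  have he : Continuous e := by fun_prop
  have hderiv : ∀ τ, HasDerivAt (fun s => b s * u ω s)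
      (deriv b τ * u ω τ + b τ * u' ω τ) τ := fun τ =>
    (hb.differentiable one_ne_zero τ).hasDerivAt.mul (hu ω τ)
  have hsplit : ∫ τ in (0:ℝ)..t, e τ • (deriv b τ * u ω τ + b τ * u' ω τ) =
      (∫ τ in (0:ℝ)..t, e τ • (deriv b τ * u ω τ)) + ∫ τ in (0:ℝ)..t, e τ • (b τ * u' ω τ) := by
    simp only [smul_add]
    exact integral_add ((he.smul (hb'.mul hu_cont)).intervalIntegrable _ _)
      ((he.smul (hb.continuous.mul (hu' ω))).intervalIntegrable _ _)
  have hlower : ‖∫ τ in (0:ℝ)..t, e τ • (deriv b τ * u ω τ)‖ ≤ T * (C₂ * (ω ^ k)⁻¹) :=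
    norm_integral_exp_I_mul_smul_le_mul (μ * ω) (hC₂ ω hω) ht
  have hω0 : 0 < ω := zero_lt_one.trans_le hω
  have hfreq : ω ≤ |μ * ω| := by
    rw [abs_of_pos (by positivity)]
    nlinarith
  have hmain : ω * ‖∫ τ in (0:ℝ)..t, e τ • (b τ * u ω τ)‖ ≤
      (2 * C₁ + T * C₂ + C₃) * (ω ^ k)⁻¹ :=
    calc _ ≤ |μ * ω| * ‖∫ τ in (0:ℝ)..t, e τ • (b τ * u ω τ)‖ := by gcongr
      _ ≤ C₁ * (ω ^ k)⁻¹ + C₁ * (ω ^ k)⁻¹ + (T * (C₂ * (ω ^ k)⁻¹) + C₃ * (ω ^ k)⁻¹) := by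
        refine (abs_mul_norm_integral_exp_I_mul_smul_le (μ * ω) hderiv
          ((hb'.mul hu_cont).add (hb.continuous.mul (hu' ω))) t).trans ?_
        rw [hsplit]
        exact add_le_add (add_le_add (hC₁ ω hω t ht) (hC₁ ω hω 0 ⟨le_rfl, ht.1.trans ht.2⟩))
          ((norm_add_le _ _).trans (add_le_add hlower (hC₃ ω hω t ht)))
      _ = _ := by ring
  rw [pow_succ, mul_inv, ← mul_assoc, ← div_eq_mul_inv, le_div_iff₀ hω0, mul_comm]
  exact hmain

def expFlow (L : A) (t : ℝ) : A := NormedSpace.exp ((t : ℂ) • L)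

theorem contDiff_expFlow (L : A) : ContDiff ℝ 1 (expFlow L) := by
  have h : ContDiff ℂ 1 (NormedSpace.exp : A → A) :=
    AnalyticOnNhd.contDiff fun x _ => NormedSpace.exp_analytic (𝕂 := ℂ) x
  exact (h.restrict_scalars ℝ).comp (Complex.ofRealCLM.contDiff.smul contDiff_const)

theorem expFlow_add (L : A) (s t : ℝ) : expFlow L (s + t) = expFlow L s * expFlow L t := by
  let _ : NormedAlgebra ℚ A := .restrictScalars ℚ ℂ A
  rw [expFlow, expFlow, expFlow, Complex.ofReal_add, add_smul,
    NormedSpace.exp_add_of_commute (((Commute.refl L).smul_left _).smul_right _)]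

def conjFlow (L α : A) (τ : ℝ) : A := expFlow L (-τ) * α * expFlow L τ

theorem contDiff_conjFlow (L α : A) : ContDiff ℝ 1 (conjFlow L α) :=
  (((contDiff_expFlow L).comp contDiff_neg).mul contDiff_const).mul (contDiff_expFlow L)

/-- The interaction picture: `G_d(t) = e^{tL} K_d(t)`. -/
def Kfun (L α u₀ : A) (ω : ℝ) : ℕ → ℝ → A
  | 0, _ => u₀
  | d+1, t => ∫ τ in (0:ℝ)..t,
      Complex.exp (Complex.I * ω * τ) • (conjFlow L α τ * Kfun L α u₀ ω d τ)

theorem continuous_Kfun (L α u₀ : A) (ω : ℝ) : ∀ d, Continuous (Kfun L α u₀ ω d)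
  | 0 => continuous_const
  | d+1 => continuous_primitive (fun _ _ => Continuous.intervalIntegrable (by
      have := continuous_Kfun L α u₀ ω d
      have := (contDiff_conjFlow L α).continuous
      fun_prop) _ _) 0

theorem continuous_Kfun_integrand (L α u₀ : A) (ω : ℝ) (d : ℕ) :
    Continuous fun τ : ℝ =>
      Complex.exp (Complex.I * ω * τ) • (conjFlow L α τ * Kfun L α u₀ ω d τ) := by
  have := continuous_Kfun L α u₀ ω d
  have := (contDiff_conjFlow L α).continuous
  fun_prop

theorem hasDerivAt_Kfun_succ (L α u₀ : A) (ω : ℝ) (d : ℕ) (t : ℝ) :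
    HasDerivAt (Kfun L α u₀ ω (d + 1))
      (Complex.exp (Complex.I * ω * t) • (conjFlow L α t * Kfun L α u₀ ω d t)) t :=
  ((continuous_Kfun_integrand L α u₀ ω d).integral_hasStrictDerivAt 0 t).hasDerivAt

theorem Gfun_eq_expFlow_mul_Kfun (L α u₀ : A) (ω : ℝ) :
    ∀ d t, Gfun L α u₀ ω d t = expFlow L t * Kfun L α u₀ ω d t
  | 0, _ => rfl
  | d+1, t => by
    have hpoint : ∀ τ : ℝ, Complex.exp (Complex.I * ω * τ) •
        (NormedSpace.exp (((t - τ : ℝ) : ℂ) • L) * α * Gfun L α u₀ ω d τ) =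
        ContinuousLinearMap.mul ℂ A (expFlow L t)
          (Complex.exp (Complex.I * ω * τ) • (conjFlow L α τ * Kfun L α u₀ ω d τ)) := fun τ => by
      rw [Gfun_eq_expFlow_mul_Kfun L α u₀ ω d τ, ContinuousLinearMap.mul_apply', mul_smul_comm,
        ← expFlow, sub_eq_add_neg, expFlow_add, conjFlow]
      simp only [mul_assoc]
    simp only [Gfun, Kfun, hpoint]
    exact ContinuousLinearMap.intervalIntegral_comp_comm _
      ((continuous_Kfun_integrand L α u₀ ω d).intervalIntegrable _ _)

theorem isBigOInvPow_integral_exp_I_mul_smul_Kfun (L α u₀ : A) (T : ℝ) (d : ℕ) {b : ℝ → A}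
    (hb : ContDiff ℝ 1 b) {μ : ℝ} (hμ : 1 ≤ μ) :
    IsBigOInvPow T (d + 1) fun ω t => ∫ τ in (0:ℝ)..t,
      Complex.exp (Complex.I * ↑(μ * ω) * τ) • (b τ * Kfun L α u₀ ω d τ) := by
  induction d generalizing b μ with
  | zero =>
    refine IsBigOInvPow.integral_exp_I_mul_smul (u' := 0) (fun _ _ => hasDerivAt_const _ _)
      (fun _ => continuous_const) hb hμ ⟨‖u₀‖, fun _ _ _ _ => by simp [Kfun]⟩ ⟨0, by simp⟩
  | succ d ih =>
    have hK : IsBigOInvPow T (d + 1) fun ω => Kfun L α u₀ ω (d + 1) := by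
      simpa only [Kfun, one_mul] using ih (contDiff_conjFlow L α) le_rfl
    refine IsBigOInvPow.integral_exp_I_mul_smul (fun ω => hasDerivAt_Kfun_succ L α u₀ ω d)
      (fun ω => continuous_Kfun_integrand L α u₀ ω d) hb hμ hK ?_
    -- `e^{iμωτ} e^{iωτ} = e^{i(μ+1)ωτ}`
    convert ih (hb.mul (contDiff_conjFlow L α)) (by linarith : 1 ≤ μ + 1) using 4 with ω t
    funext τ
    rw [mul_smul_comm, smul_smul, ← Complex.exp_add, ← mul_assoc]
    congr 2
    push_cast
    ring

theorem isBigOInvPow_Kfun (L α u₀ : A) (T : ℝ) :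
    ∀ d, IsBigOInvPow T d fun ω => Kfun L α u₀ ω d
  | 0 => ⟨‖u₀‖, fun _ _ _ _ => by simp [Kfun]⟩
  | d+1 => by
    simpa only [Kfun, one_mul] using
      isBigOInvPow_integral_exp_I_mul_smul_Kfun L α u₀ T d (contDiff_conjFlow L α) le_rfl

theorem stmt14_general (L α u₀ : A) (T : ℝ) (d : ℕ) :
    ∃ C : ℝ, 0 ≤ C ∧ ∀ ω : ℝ, 1 ≤ ω → ∀ t ∈ Set.Icc (0:ℝ) T,
      ‖Gfun L α u₀ ω d t‖ ≤ C * (ω ^ d)⁻¹ := by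
  obtain ⟨C, hC⟩ := (isBigOInvPow_Kfun L α u₀ T d).mul_left (contDiff_expFlow L).continuous
  refine ⟨max C 0, le_max_right _ _, fun ω hω t ht => ?_⟩
  rw [Gfun_eq_expFlow_mul_Kfun]
  exact (hC ω hω t ht).trans (mul_le_mul_of_nonneg_right (le_max_left _ _) (by positivity))

/-- For every `d ≥ 1`, there exists a constant `C ≥ 0`, independent of `ω`,
such that for all real `ω ≥ 1`, `sup_{t∈[0,t*]} ‖G_d(t)‖ ≤ C·ω^{−d}`. -/
theorem stmt14 (L α u₀ : A) (T : ℝ) (hT : 0 < T) (d : ℕ) (hd : 1 ≤ d) :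
    ∃ C : ℝ, 0 ≤ C ∧ ∀ ω : ℝ, 1 ≤ ω → ∀ t ∈ Set.Icc (0:ℝ) T,
      ‖Gfun L α u₀ ω d t‖ ≤ C * (ω ^ d)⁻¹ :=
  stmt14_general L α u₀ T d
end
end
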